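/- Let K be a nontrivial positive and multiplicatively cancellative commutative semiring, X, Y, Z pairwise disjoint finite sets of variables with finite nonempty domains, and R a K-relation over X∪Y∪Z with nonempty support. If R[X∪Y] ⋈ R[X∪Z] ≡ R (the decomposition of R along X∪Y and X∪Z is lossless-join), then R satisfies the conditional independence CI(X; Y, Z). -/

import Mathlib

/-! # Preliminaries: K-relations over semirings -/

open Finset

variable {V : Type*}

/-- A tuple over the finite set `X` of variables: it assigns to each variable
`a ∈ X` a value in its domain `Dom a`. -/
abbrev Tup (Dom : V → Type*) (X : Finset V) : Type _ :=
  ∀ a : X, Dom a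

/-- Restriction `t[Y]` of a tuple `t` over `X` to a subset `Y ⊆ X`. -/
def Tup.restrict {Dom : V → Type*} {X Y : Finset V} (h : Y ⊆ X) (t : Tup Dom X) :
    Tup Dom Y :=
  fun a => t ⟨a.1, h a.2⟩

open Classical in
/-- The marginal of a `K`-relation `R` over a schema `X` on a subset `Y ⊆ X`,
evaluated at a tuple `u` over `Y`: the sum of `R t` over all tuples `t` over `X`
with `t[Y] = u`. -/
noncomputable def margin {K : Type*} [CommSemiring K] [DecidableEq V]
    {Dom : V → Type*} [∀ a, Fintype (Dom a)] {X Y : Finset V}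
    (R : Tup Dom X → K) (h : Y ⊆ X) (u : Tup Dom Y) : K :=
  ∑ t : Tup Dom X, if Tup.restrict h t = u then R t else 0

open Classical in
/-- `c_S(u)`: the product of the marginal `S[Z]` over all tuples `v` in the
support of `S[Z]` different from `u` (empty products are `1`). -/
noncomputable def cfun {K : Type*} [CommSemiring K] [DecidableEq V]
    {Dom : V → Type*} [∀ a, Fintype (Dom a)] {Y Z : Finset V}
    (S : Tup Dom Y → K) (h : Z ⊆ Y) (u : Tup Dom Z) : K :=
  ∏ v : Tup Dom Z, if margin S h v ≠ 0 ∧ v ≠ u then margin S h v else 1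

/-- The join `R ⋈ S` of a `K`-relation `R` over `X` and a `K`-relation `S` over `Y`,
realized on the schema `T = X ∪ Y`:
`(R ⋈ S)(t) = R(t[X]) ⬝ S(t[Y]) ⬝ c_S(t[X ∩ Y])`. -/
noncomputable def joinOn {K : Type*} [CommSemiring K] [DecidableEq V]
    {Dom : V → Type*} [∀ a, Fintype (Dom a)] {X Y T : Finset V}
    (R : Tup Dom X → K) (S : Tup Dom Y → K)
    (hX : X ⊆ T) (hY : Y ⊆ T) (_hT : T ⊆ X ∪ Y) : Tup Dom T → K :=
  fun t =>
    R (Tup.restrict hX t) * S (Tup.restrict hY t) *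
      cfun (Z := X ∩ Y) S Finset.inter_subset_right
        (Tup.restrict ((Finset.inter_subset_right (s₁ := X)).trans hY) t)

/-- A `K`-relation `R` over the schema `S` satisfies the conditional independence
`CI(X; Y, Z)` (for `X, Y, Z ⊆ S`) if for every tuple `t` over `X ∪ Y ∪ Z`,
`R(t[X∪Y]) ⬝ R(t[X∪Z]) = R(t[X∪Y∪Z]) ⬝ R(t[X])`, all values being marginals of `R`. -/
def satCI {K : Type*} [CommSemiring K] [DecidableEq V]
    {Dom : V → Type*} [∀ a, Fintype (Dom a)] {S X Y Z : Finset V}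
    (R : Tup Dom S → K) (hX : X ⊆ S) (hY : Y ⊆ S) (hZ : Z ⊆ S) : Prop :=
  ∀ t : Tup Dom (X ∪ Y ∪ Z),
    margin R (Finset.union_subset hX hY) (Tup.restrict Finset.subset_union_left t) *
      margin R (Finset.union_subset hX hZ)
        (Tup.restrict (Finset.union_subset
          (Finset.subset_union_left.trans Finset.subset_union_left)
          Finset.subset_union_right) t) =
    margin R (Finset.union_subset (Finset.union_subset hX hY) hZ) t *
      margin R hX
        (Tup.restrict (Finset.subset_union_left.trans Finset.subset_union_left) t)

/-- A `K`-relation `R` over the schema `S` satisfies the functional dependency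
`U → W` if any two tuples in the support of `R` agreeing on `U` agree on `W`. -/
def satFD {K : Type*} [Zero K] {Dom : V → Type*} {S U W : Finset V}
    (R : Tup Dom S → K) (hU : U ⊆ S) (hW : W ⊆ S) : Prop :=
  ∀ t t' : Tup Dom S, R t ≠ 0 → R t' ≠ 0 →
    Tup.restrict hU t = Tup.restrict hU t' → Tup.restrict hW t = Tup.restrict hW t'

/-- Two `K`-relations over the same schema are equivalent (up to normalization),
`R ≡ R'`, if `aR = bR'` for some nonzero `a, b ∈ K`. -/
def equivRel {K : Type*} [CommSemiring K] {Dom : V → Type*} {X : Finset V}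
    (R R' : Tup Dom X → K) : Prop :=
  ∃ a b : K, a ≠ 0 ∧ b ≠ 0 ∧ ∀ t, a * R t = b * R' t

/-- `K` is `⊕`-positive: `a + b = 0` implies `a = b = 0`. -/
def plusPos (K : Type*) [CommSemiring K] : Prop :=
  ∀ a b : K, a + b = 0 → a = 0 ∧ b = 0

/-- `K` has no divisors of zero. -/
def noZD (K : Type*) [CommSemiring K] : Prop :=
  ∀ a b : K, a * b = 0 → a = 0 ∨ b = 0

/-- `K` is positive: `⊕`-positive and without zero divisors. -/
def posSemiring (K : Type*) [CommSemiring K] : Prop :=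
  plusPos K ∧ noZD K

/-- `K` is multiplicatively cancellative. -/
def mulCanc (K : Type*) [CommSemiring K] : Prop :=
  ∀ a b c : K, a ≠ 0 → a * b = a * c → b = c

/-- `K` is additively cancellative. -/
def addCanc (K : Type*) [CommSemiring K] : Prop :=
  ∀ a b c : K, a + b = a + c → b = c

/-- `K` is naturally totally ordered: the preorder `a ≤ b ↔ ∃ c, a + c = b`
is antisymmetric and total. -/
def natTotOrd (K : Type*) [CommSemiring K] : Prop :=
  (∀ a b : K, (∃ c, a + c = b) → (∃ c, b + c = a) → a = b) ∧
    (∀ a b : K, (∃ c, a + c = b) ∨ (∃ c, b + c = a))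

/-- `K` is a semifield: every nonzero element has a multiplicative inverse. -/
def isSemifield (K : Type*) [CommSemiring K] : Prop :=
  ∀ a : K, a ≠ 0 → ∃ b, a * b = 1

theorem subL [DecidableEq V] {X Y Z : Finset V} : X ⊆ X ∪ Y ∪ Z :=
  Finset.subset_union_left.trans Finset.subset_union_left

theorem subM [DecidableEq V] {X Y Z : Finset V} : Y ⊆ X ∪ Y ∪ Z :=
  Finset.subset_union_right.trans Finset.subset_union_left

theorem subR [DecidableEq V] {X Y Z : Finset V} : Z ⊆ X ∪ Y ∪ Z :=
  Finset.subset_union_right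

theorem subXY [DecidableEq V] {X Y Z : Finset V} : X ∪ Y ⊆ X ∪ Y ∪ Z :=
  Finset.subset_union_left

theorem subXZ [DecidableEq V] {X Y Z : Finset V} : X ∪ Z ⊆ X ∪ Y ∪ Z :=
  Finset.union_subset subL subR

theorem unionSplit [DecidableEq V] {X Y Z : Finset V} :
    X ∪ Y ∪ Z ⊆ (X ∪ Y) ∪ (X ∪ Z) := by
  intro a ha
  simp only [Finset.mem_union] at ha ⊢
  tauto

/-! ## Auxiliary lemmas -/

section Aux

lemma Tup.restrict_restrict' {Dom : V → Type*} {X Y Z : Finset V} (h1 : Y ⊆ X) (h2 : Z ⊆ Y)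
    (h3 : Z ⊆ X) (t : Tup Dom X) :
    Tup.restrict h2 (Tup.restrict h1 t) = Tup.restrict h3 t := rfl

variable [DecidableEq V] {Dom : V → Type*}

/-- Glue a tuple over `A` with a tuple over `B` to a tuple over `A ∪ B`,
preferring the first on the overlap. -/
def glue {A B : Finset V} (u : Tup Dom A) (v : Tup Dom B) : Tup Dom (A ∪ B) :=
  fun x => if h : x.1 ∈ A then u ⟨x.1, h⟩
    else v ⟨x.1, (Finset.mem_union.1 x.2).resolve_left h⟩

lemma glue_restrict_left' {A B : Finset V} (h : A ⊆ A ∪ B) (u : Tup Dom A) (v : Tup Dom B) :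
    Tup.restrict h (glue u v) = u := by
  funext a; simp [Tup.restrict, glue, a.2]

lemma glue_restricts {A B : Finset V} (t : Tup Dom (A ∪ B)) :
    glue (Tup.restrict Finset.subset_union_left t)
      (Tup.restrict Finset.subset_union_right t) = t := by
  funext a
  by_cases h : a.1 ∈ A <;> simp [glue, Tup.restrict, h]

lemma glue_restrict_XZ {X Y Z : Finset V} (hYZ : Disjoint Y Z)
    (h : X ∪ Z ⊆ X ∪ Y ∪ Z) (x : Tup Dom X) (y : Tup Dom Y) (z : Tup Dom Z) :
    Tup.restrict h (glue (glue x y) z) = glue x z := by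
  funext a
  by_cases hx : a.1 ∈ X
  · have hxy : a.1 ∈ X ∪ Y := Finset.mem_union_left _ hx
    simp [Tup.restrict, glue, hx, hxy]
  · have hz : a.1 ∈ Z := (Finset.mem_union.1 a.2).resolve_left hx
    have hy : a.1 ∉ Y := fun h' => Finset.disjoint_left.1 hYZ h' hz
    have hxy : a.1 ∉ X ∪ Y := by simp [Finset.mem_union, hx, hy]
    simp [Tup.restrict, glue, hx, hxy]

variable [∀ a, Fintype (Dom a)] {K : Type*} [CommSemiring K]

/-- For disjoint `A` and `B`, tuples over `A ∪ B` are pairs of tuples over `A`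
and over `B`. -/
def tupEquiv {A B : Finset V} (hAB : Disjoint A B) :
    Tup Dom (A ∪ B) ≃ Tup Dom A × Tup Dom B where
  toFun t := (Tup.restrict Finset.subset_union_left t,
              Tup.restrict Finset.subset_union_right t)
  invFun p := glue p.1 p.2
  left_inv t := glue_restricts t
  right_inv p := Prod.ext (glue_restrict_left' Finset.subset_union_left _ _)
    (by
      funext a
      have hb : a.1 ∈ B := a.2
      have ha : a.1 ∉ A := fun h' => Finset.disjoint_left.1 hAB h' hb
      simp [Tup.restrict, glue, ha])

lemma sum_tup_union {A B : Finset V} (hAB : Disjoint A B) (f : Tup Dom (A ∪ B) → K) :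
    ∑ t, f t = ∑ u : Tup Dom A, ∑ v : Tup Dom B, f (glue u v) := by
  have h := Fintype.sum_equiv (tupEquiv hAB) f (fun p => f (glue p.1 p.2))
    (fun t => (congrArg f (glue_restricts t)).symm)
  rw [h, Fintype.sum_prod_type]

lemma margin_comp {X Y Z : Finset V} (R : Tup Dom X → K) (h1 : Y ⊆ X) (h2 : Z ⊆ Y)
    (h3 : Z ⊆ X) (u : Tup Dom Z) :
    margin (margin R h1) h2 u = margin R h3 u := by
  classical
  unfold margin
  calc ∑ s : Tup Dom Y, (if Tup.restrict h2 s = u then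
          ∑ t : Tup Dom X, if Tup.restrict h1 t = s then R t else 0 else 0)
      = ∑ s : Tup Dom Y, ∑ t : Tup Dom X,
          (if Tup.restrict h1 t = s then (if Tup.restrict h2 s = u then R t else 0) else 0) := by
        refine Finset.sum_congr rfl fun s _ => ?_
        by_cases hs : Tup.restrict h2 s = u <;> simp [hs]
    _ = ∑ t : Tup Dom X, ∑ s : Tup Dom Y,
          (if Tup.restrict h1 t = s then (if Tup.restrict h2 s = u then R t else 0) else 0) :=
        Finset.sum_comm
    _ = ∑ t : Tup Dom X, (if Tup.restrict h3 t = u then R t else 0) := by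
        refine Finset.sum_congr rfl fun t _ => ?_
        rw [Finset.sum_ite_eq]
        simp only [Finset.mem_univ, if_true]
        rfl

lemma margin_self {X : Finset V} (R : Tup Dom X → K) (h : X ⊆ X) (t : Tup Dom X) :
    margin R h t = R t := by
  classical
  unfold margin
  have he : ∀ s : Tup Dom X, Tup.restrict h s = s := fun s => rfl
  simp only [he]
  rw [Finset.sum_ite_eq']
  simp

lemma margin_union_left {A B : Finset V} (hAB : Disjoint A B) (S : Tup Dom (A ∪ B) → K)
    (h : A ⊆ A ∪ B) (u : Tup Dom A) :
    margin S h u = ∑ v : Tup Dom B, S (glue u v) := by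
  classical
  unfold margin
  rw [sum_tup_union hAB]
  have he : ∀ (x : Tup Dom A) (v : Tup Dom B), Tup.restrict h (glue x v) = x :=
    fun x v => glue_restrict_left' h x v
  simp only [he]
  calc ∑ x : Tup Dom A, ∑ v : Tup Dom B, (if x = u then S (glue x v) else 0)
      = ∑ x : Tup Dom A, (if x = u then ∑ v : Tup Dom B, S (glue x v) else 0) := by
        refine Finset.sum_congr rfl fun x _ => ?_
        by_cases hx : x = u <;> simp [hx]
    _ = ∑ v : Tup Dom B, S (glue u v) := by
        rw [Finset.sum_ite_eq']
        simp

lemma plusPos_sum {ι : Type*} (hp : plusPos K) {s : Finset ι} {f : ι → K}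
    (h : ∑ i ∈ s, f i = 0) : ∀ i ∈ s, f i = 0 := by
  classical
  induction s using Finset.induction with
  | empty => simp
  | insert _ _ hx ih =>
      rw [Finset.sum_insert hx] at h
      obtain ⟨h1, h2⟩ := hp _ _ h
      intro i hi
      rcases Finset.mem_insert.1 hi with rfl | hi
      · exact h1
      · exact ih h2 i hi

lemma margin_eq_zero (hp : plusPos K) {X Y : Finset V} {R : Tup Dom X → K} {h : Y ⊆ X}
    {t : Tup Dom X} (h0 : margin R h (Tup.restrict h t) = 0) : R t = 0 := by
  classical
  unfold margin at h0
  have := plusPos_sum hp h0 t (Finset.mem_univ t)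
  simpa using this

lemma noZD_prod {ι : Type*} [Nontrivial K] (hz : noZD K) {s : Finset ι} {f : ι → K}
    (h : ∀ i ∈ s, f i ≠ 0) : ∏ i ∈ s, f i ≠ 0 := by
  classical
  induction s using Finset.induction with
  | empty => simp
  | insert _ _ hx ih =>
      rw [Finset.prod_insert hx]
      intro h0
      rcases hz _ _ h0 with h' | h'
      · exact h _ (Finset.mem_insert_self _ _) h'
      · exact ih (fun i hi => h i (Finset.mem_insert_of_mem hi)) h'

end Aux

/-- Over a positive, multiplicatively cancellative semiring, a lossless-join
decomposition along `X ∪ Y` and `X ∪ Z` entails `CI(X; Y, Z)`. -/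
theorem losslessJoin_implies_ci
    [DecidableEq V] {Dom : V → Type*} [∀ a, Fintype (Dom a)] [∀ a, Nonempty (Dom a)]
    {K : Type*} [CommSemiring K] [Nontrivial K]
    (hpos : posSemiring K) (hmc : mulCanc K)
    {X Y Z : Finset V} (hXY : Disjoint X Y) (hXZ : Disjoint X Z) (hYZ : Disjoint Y Z)
    (R : Tup Dom (X ∪ Y ∪ Z) → K) (hsupp : ∃ t, R t ≠ 0)
    (hdecomp : equivRel
      (joinOn (margin R (subXY (X := X) (Y := Y) (Z := Z))) (margin R subXZ)
        subXY subXZ unionSplit) R) :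
    satCI R (subL (X := X) (Y := Y) (Z := Z)) subM subR := by
  classical
  obtain ⟨a, b, ha, hb, hab⟩ := hdecomp
  simp only [joinOn] at hab
  have hXY_Z : Disjoint (X ∪ Y) Z := Finset.disjoint_union_left.2 ⟨hXZ, hYZ⟩
  have hWX : (X ∪ Y) ∩ (X ∪ Z) ⊆ X := by
    intro a' ha'
    simp only [Finset.mem_inter, Finset.mem_union] at ha'
    rcases ha' with ⟨h1 | h1, h2 | h2⟩
    · exact h1
    · exact h1
    · exact h2
    · exact (Finset.disjoint_left.1 hYZ h1 h2).elim
  intro t0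
  rw [margin_self]
  -- canonical form of the goal
  show margin R (subXY (X := X) (Y := Y) (Z := Z)) (Tup.restrict subXY t0) *
        margin R (subXZ (X := X) (Y := Y) (Z := Z)) (Tup.restrict subXZ t0) =
      R t0 * margin R (subL (X := X) (Y := Y) (Z := Z)) (Tup.restrict subL t0)
  set u : Tup Dom X := Tup.restrict (subL (X := X) (Y := Y) (Z := Z)) t0 with hu
  -- facts about restrictions of glued tuples
  have hXglue : ∀ (h : X ⊆ X ∪ Y ∪ Z) (y : Tup Dom Y) (z : Tup Dom Z),
      Tup.restrict h (glue (glue u y) z) = u := by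
    intro h y z
    have e : Tup.restrict h (glue (glue u y) z) =
        Tup.restrict Finset.subset_union_left
          (Tup.restrict Finset.subset_union_left (glue (glue u y) z)) := rfl
    rw [e, glue_restrict_left', glue_restrict_left']
  have hWglue : ∀ (h : (X ∪ Y) ∩ (X ∪ Z) ⊆ X ∪ Y ∪ Z) (y : Tup Dom Y) (z : Tup Dom Z),
      Tup.restrict h (glue (glue u y) z) = Tup.restrict hWX u := by
    intro h y z
    have e : Tup.restrict h (glue (glue u y) z) =
        Tup.restrict hWX (Tup.restrict (subL (X := X) (Y := Y) (Z := Z))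
          (glue (glue u y) z)) := rfl
    rw [e, hXglue]
  have hWt0 : ∀ (h : (X ∪ Y) ∩ (X ∪ Z) ⊆ X ∪ Y ∪ Z),
      Tup.restrict h t0 = Tup.restrict hWX u := fun _ => rfl
  -- pointwise identity from the lossless-join hypothesis, on glued tuples
  have hpt : ∀ (y : Tup Dom Y) (z : Tup Dom Z),
      a * (margin R (subXY (X := X) (Y := Y) (Z := Z)) (glue u y) *
        margin R (subXZ (X := X) (Y := Y) (Z := Z)) (glue u z) *
        cfun (margin R subXZ) Finset.inter_subset_right (Tup.restrict hWX u)) =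
      b * R (glue (glue u y) z) := by
    intro y z
    have h := hab (glue (glue u y) z)
    simp only [glue_restrict_left', glue_restrict_XZ hYZ, hWglue] at h
    exact h
  -- pointwise identity at t0
  have hpt0 :
      a * (margin R (subXY (X := X) (Y := Y) (Z := Z)) (Tup.restrict subXY t0) *
        margin R (subXZ (X := X) (Y := Y) (Z := Z)) (Tup.restrict subXZ t0) *
        cfun (margin R subXZ) Finset.inter_subset_right (Tup.restrict hWX u)) =
      b * R t0 := by
    have h := hab t0
    simp only [hWt0] at h
    exact h
  -- marginals as sums over glued tuples
  have hMA : margin R (subL (X := X) (Y := Y) (Z := Z)) u =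
      ∑ y : Tup Dom Y, margin R (subXY (X := X) (Y := Y) (Z := Z)) (glue u y) := by
    rw [← margin_comp R (subXY (X := X) (Y := Y) (Z := Z)) Finset.subset_union_left
      (subL (X := X) (Y := Y) (Z := Z)) u]
    exact margin_union_left hXY _ Finset.subset_union_left u
  have hMB : margin R (subL (X := X) (Y := Y) (Z := Z)) u =
      ∑ z : Tup Dom Z, margin R (subXZ (X := X) (Y := Y) (Z := Z)) (glue u z) := by
    rw [← margin_comp R (subXZ (X := X) (Y := Y) (Z := Z)) Finset.subset_union_left
      (subL (X := X) (Y := Y) (Z := Z)) u]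
    exact margin_union_left hXZ _ Finset.subset_union_left u
  have hMfull : margin R (subL (X := X) (Y := Y) (Z := Z)) u =
      ∑ y : Tup Dom Y, ∑ z : Tup Dom Z, R (glue (glue u y) z) := by
    rw [hMA]
    refine Finset.sum_congr rfl fun y _ => ?_
    exact margin_union_left hXY_Z R Finset.subset_union_left (glue u y)
  by_cases hMu : margin R (subL (X := X) (Y := Y) (Z := Z)) u = 0
  · -- degenerate case: everything vanishes
    have hR0 : R t0 = 0 := margin_eq_zero hpos.1 hMu
    have hA0 : margin R (subXY (X := X) (Y := Y) (Z := Z)) (Tup.restrict subXY t0) = 0 := by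
      refine margin_eq_zero (h := Finset.subset_union_left) hpos.1 ?_
      rw [margin_comp R (subXY (X := X) (Y := Y) (Z := Z)) Finset.subset_union_left
        (subL (X := X) (Y := Y) (Z := Z))]
      exact hMu
    rw [hA0, hR0, zero_mul, zero_mul]
  · -- main case
    have hcne : cfun (margin R subXZ) Finset.inter_subset_right (Tup.restrict hWX u) ≠ 0 := by
      unfold cfun
      refine noZD_prod hpos.2 fun v _ => ?_
      by_cases hv : margin (margin R subXZ) Finset.inter_subset_right v ≠ 0 ∧
          v ≠ Tup.restrict hWX u
      · rw [if_pos hv]; exact hv.1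
      · rw [if_neg hv]; exact one_ne_zero
    set cW := cfun (margin R subXZ) Finset.inter_subset_right (Tup.restrict hWX u) with hcw
    set Mu := margin R (subL (X := X) (Y := Y) (Z := Z)) u with hmu
    have key : a * (Mu * Mu * cW) = b * Mu := by
      calc a * (Mu * Mu * cW)
          = a * ((∑ y : Tup Dom Y, margin R (subXY (X := X) (Y := Y) (Z := Z)) (glue u y)) *
              (∑ z : Tup Dom Z, margin R (subXZ (X := X) (Y := Y) (Z := Z)) (glue u z)) * cW) := by
            rw [← hMA, ← hMB]
        _ = ∑ y : Tup Dom Y, ∑ z : Tup Dom Z,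
              a * (margin R (subXY (X := X) (Y := Y) (Z := Z)) (glue u y) *
                margin R (subXZ (X := X) (Y := Y) (Z := Z)) (glue u z) * cW) := by
            rw [Finset.sum_mul_sum, Finset.sum_mul, Finset.mul_sum]
            refine Finset.sum_congr rfl fun y _ => ?_
            rw [Finset.sum_mul, Finset.mul_sum]
        _ = ∑ y : Tup Dom Y, ∑ z : Tup Dom Z, b * R (glue (glue u y) z) := by
            refine Finset.sum_congr rfl fun y _ => Finset.sum_congr rfl fun z _ => hpt y z
        _ = b * ∑ y : Tup Dom Y, ∑ z : Tup Dom Z, R (glue (glue u y) z) := by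
            rw [Finset.mul_sum]
            refine Finset.sum_congr rfl fun y _ => ?_
            rw [Finset.mul_sum]
        _ = b * Mu := by rw [← hMfull]
    have hbe : a * Mu * cW = b := by
      refine hmc Mu _ _ hMu ?_
      calc Mu * (a * Mu * cW) = a * (Mu * Mu * cW) := by ring
        _ = b * Mu := key
        _ = Mu * b := mul_comm _ _
    have hacW : a * cW ≠ 0 := by
      intro h0
      rcases hpos.2 _ _ h0 with h' | h'
      · exact ha h'
      · exact hcne h'
    have hfin : margin R (subXY (X := X) (Y := Y) (Z := Z)) (Tup.restrict subXY t0) *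
        margin R (subXZ (X := X) (Y := Y) (Z := Z)) (Tup.restrict subXZ t0) =
        Mu * R t0 := by
      refine hmc (a * cW) _ _ hacW ?_
      calc (a * cW) * (margin R (subXY (X := X) (Y := Y) (Z := Z)) (Tup.restrict subXY t0) *
            margin R (subXZ (X := X) (Y := Y) (Z := Z)) (Tup.restrict subXZ t0)) =
          a * (margin R (subXY (X := X) (Y := Y) (Z := Z)) (Tup.restrict subXY t0) *
            margin R (subXZ (X := X) (Y := Y) (Z := Z)) (Tup.restrict subXZ t0) * cW) := by ring
        _ = b * R t0 := hpt0
        _ = (a * Mu * cW) * R t0 := by rw [hbe]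
        _ = (a * cW) * (Mu * R t0) := by ring
    exact hfin.trans (mul_comm _ _)
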